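/- arXiv:1003.1236 — 5 statements merged into one kernel-verified Lean document; each statement's English description precedes it below -/
import Mathlib

section
/- Let L be an algebraically closed field of characteristic zero and let f ∈ L[t] have degree d ≥ 2 with exactly r distinct roots. Then the Newton map N_f(t) = t - f(t)/f'(t), viewed as a rational map on the projective line over L, has degree r. -/
open Polynomial

/-- Degrees of the numerator and denominator of a quotient of coprime polynomials. -/
theorem newton_aux {K : Type*} [Field K] {p q : K[X]} (hp : p ≠ 0) (hq : q ≠ 0)
    (hpq : IsCoprime p q) :
    ((algebraMap K[X] (RatFunc K)) p / (algebraMap K[X] (RatFunc K)) q).num.natDegree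
        = p.natDegree ∧
      ((algebraMap K[X] (RatFunc K)) p / (algebraMap K[X] (RatFunc K)) q).denom.natDegree
        = q.natDegree := by
  classical
  have hg : IsUnit (GCDMonoid.gcd p q) :=
    hpq.isUnit_of_dvd' (gcd_dvd_left _ _) (gcd_dvd_right _ _)
  have hg0 : GCDMonoid.gcd p q ≠ 0 := fun h => by simp [h] at hg
  have hgdeg : (GCDMonoid.gcd p q).natDegree = 0 := natDegree_eq_zero_of_isUnit hg
  have hpd : (p / GCDMonoid.gcd p q).natDegree = p.natDegree := by
    have h1 : GCDMonoid.gcd p q * (p / GCDMonoid.gcd p q) = p :=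
      EuclideanDomain.mul_div_cancel' hg0 (gcd_dvd_left _ _)
    have h2 : p / GCDMonoid.gcd p q ≠ 0 := left_div_gcd_ne_zero hp
    have := natDegree_mul hg0 h2
    rw [h1, hgdeg] at this
    omega
  have hbd : (q / GCDMonoid.gcd p q).natDegree = q.natDegree := by
    have h1 : GCDMonoid.gcd p q * (q / GCDMonoid.gcd p q) = q :=
      EuclideanDomain.mul_div_cancel' hg0 (gcd_dvd_right _ _)
    have h2 : q / GCDMonoid.gcd p q ≠ 0 := right_div_gcd_ne_zero hq
    have := natDegree_mul hg0 h2
    rw [h1, hgdeg] at this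
    omega
  have hbdl : (q / GCDMonoid.gcd p q).leadingCoeff⁻¹ ≠ 0 :=
    inv_ne_zero (leadingCoeff_ne_zero.mpr (right_div_gcd_ne_zero hq))
  constructor
  · rw [RatFunc.num_div, natDegree_C_mul hbdl, hpd]
  · rw [RatFunc.denom_div _ hq, natDegree_C_mul hbdl, hbd]

/-- If `f` has degree `d ≥ 2` over an algebraically closed field of characteristic zero
and has exactly `r` distinct roots, then the Newton map `N_f(t) = t - f(t)/f'(t)`,
as a rational map on the projective line (i.e. as a rational function, whose degree is the
maximum of the degrees of its numerator and denominator in lowest terms), has degree `r`. -/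
theorem newton_map_degree {L : Type*} [Field L] [DecidableEq L] [IsAlgClosed L] [CharZero L]
    (f : L[X]) (hd : 2 ≤ f.natDegree) (r : ℕ) (hr : r = f.roots.toFinset.card)
    (N : RatFunc L)
    (hN : N = RatFunc.X - algebraMap L[X] (RatFunc L) f / algebraMap L[X] (RatFunc L) (derivative f)) :
    max N.num.natDegree N.denom.natDegree = r := by
  classical
  set d := f.natDegree with hdd
  have hf0 : f ≠ 0 := fun h => by simp [hdd, h] at hd
  have hdL : (d : L) ≠ 0 := Nat.cast_ne_zero.mpr (by omega)
  -- derivative facts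
  have hcoeff : (derivative f).coeff (d - 1) = (d : L) * f.leadingCoeff := by
    have h1 : d - 1 + 1 = d := by omega
    rw [coeff_derivative, h1]
    rw [leadingCoeff, ← hdd, mul_comm]
    congr 1
    have : ((d : L) - 1) + 1 = (d : L) := by ring
    rw [← this]
    push_cast [Nat.cast_sub (by omega : 1 ≤ d)]
    ring
  have hfd0 : (derivative f).coeff (d - 1) ≠ 0 := by
    rw [hcoeff]
    exact mul_ne_zero hdL (leadingCoeff_ne_zero.mpr hf0)
  have hdf_deg : (derivative f).natDegree = d - 1 :=
    le_antisymm (natDegree_derivative_le f) (le_natDegree_of_ne_zero hfd0)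
  have hdf0 : derivative f ≠ 0 := fun h => by simp [h] at hfd0
  have hleadf' : (derivative f).leadingCoeff = (d : L) * f.leadingCoeff := by
    rw [leadingCoeff, hdf_deg, hcoeff]
  -- gcd decomposition
  set k := GCDMonoid.gcd f (derivative f) with hk
  set a := f / k with ha
  set b := derivative f / k with hb
  have hk0 : k ≠ 0 := gcd_ne_zero_of_left hf0
  have hka : k * a = f := EuclideanDomain.mul_div_cancel' hk0 (gcd_dvd_left _ _)
  have hkb : k * b = derivative f := EuclideanDomain.mul_div_cancel' hk0 (gcd_dvd_right _ _)
  have ha0 : a ≠ 0 := left_div_gcd_ne_zero hf0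
  have hb0 : b ≠ 0 := right_div_gcd_ne_zero hdf0
  have hab : IsCoprime a b := isCoprime_div_gcd_div_gcd hdf0
  -- root multiplicities of a
  have hmult : ∀ t : L, rootMultiplicity t a = if f.IsRoot t then 1 else 0 := by
    intro t
    have e1 : rootMultiplicity t f = rootMultiplicity t k + rootMultiplicity t a := by
      rw [← hka]; exact rootMultiplicity_mul (hka ▸ hf0)
    by_cases hroot : f.IsRoot t
    · have e2 : rootMultiplicity t (derivative f) = rootMultiplicity t f - 1 :=
        derivative_rootMultiplicity_of_root hroot
      have e3 : rootMultiplicity t (derivative f)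
          = rootMultiplicity t k + rootMultiplicity t b := by
        rw [← hkb]; exact rootMultiplicity_mul (hkb ▸ hdf0)
      have hm1 : 1 ≤ rootMultiplicity t f := (rootMultiplicity_pos hf0).mpr hroot
      have hnb : ¬ (a.IsRoot t ∧ b.IsRoot t) := by
        rintro ⟨h1, h2⟩
        obtain ⟨u, v, huv⟩ := hab
        have := congrArg (Polynomial.eval t) huv
        simp [h1.eq_zero, h2.eq_zero] at this
      have hb_mult : rootMultiplicity t b = 0 ∨ rootMultiplicity t a = 0 := by
        by_contra hcon
        push_neg at hcon
        exact hnb ⟨(rootMultiplicity_pos ha0).mp (Nat.pos_of_ne_zero hcon.2),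
          (rootMultiplicity_pos hb0).mp (Nat.pos_of_ne_zero hcon.1)⟩
      rw [if_pos hroot]
      rcases hb_mult with h | h
      · omega
      · omega
    · rw [if_neg hroot, rootMultiplicity_eq_zero hroot] at *
      omega
  -- roots of a
  have hroots_a : a.roots = f.roots.dedup := by
    ext t
    rw [count_roots, Multiset.count_dedup, hmult t]
    simp [mem_roots hf0]
  have hna : a.natDegree = r := by
    rw [← splits_iff_card_roots.mp (IsAlgClosed.splits a), hroots_a, hr]
    rfl
  -- degrees
  have hdega : d = k.natDegree + r := by
    rw [← hna, ← natDegree_mul hk0 ha0, hka]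
  have hdegb : (d - 1 : ℕ) = k.natDegree + b.natDegree := by
    rw [← hdf_deg, ← natDegree_mul hk0 hb0, hkb]
  have hnb : b.natDegree = r - 1 ∧ 1 ≤ r := by omega
  -- leading coefficients
  have hlead_ab : b.leadingCoeff = (d : L) * a.leadingCoeff := by
    have h1 : f.leadingCoeff = k.leadingCoeff * a.leadingCoeff := by
      rw [← hka, leadingCoeff_mul]
    have h2 : (derivative f).leadingCoeff = k.leadingCoeff * b.leadingCoeff := by
      rw [← hkb, leadingCoeff_mul]
    have hkl : k.leadingCoeff ≠ 0 := leadingCoeff_ne_zero.mpr hk0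
    apply mul_left_cancel₀ hkl
    rw [← h2, hleadf', h1]
    ring
  -- the numerator polynomial
  set p := X * b - a with hp
  have hcoeffp : p.coeff r = ((d : L) - 1) * a.leadingCoeff := by
    have h1 : r = (r - 1) + 1 := by omega
    rw [hp, Polynomial.coeff_sub, h1, coeff_X_mul]
    rw [← h1, ← hnb.1, ← hna]
    rw [show b.coeff b.natDegree = b.leadingCoeff from rfl,
      show a.coeff a.natDegree = a.leadingCoeff from rfl, hlead_ab]
    ring
  have hcoeffp0 : p.coeff r ≠ 0 := by
    rw [hcoeffp]
    refine mul_ne_zero ?_ (leadingCoeff_ne_zero.mpr ha0)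
    intro h
    have : (d : L) = 1 := by linear_combination h
    have : d = 1 := by exact_mod_cast this
    omega
  have hnp : p.natDegree = r := by
    refine le_antisymm ?_ (le_natDegree_of_ne_zero hcoeffp0)
    refine (natDegree_sub_le _ _).trans ?_
    rw [natDegree_mul X_ne_zero hb0, natDegree_X, hna, hnb.1]
    omega
  have hp0 : p ≠ 0 := fun h => hcoeffp0 (by simp [h])
  -- coprimality of p and b
  have hpb : IsCoprime p b := by
    have := (hab.neg_left).add_mul_left_left X
    rwa [show -a + b * X = p by rw [hp]; ring] at this
  -- N as a quotient
  have hNeq : N = algebraMap L[X] (RatFunc L) p / algebraMap L[X] (RatFunc L) b := by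
    have hbz : algebraMap L[X] (RatFunc L) b ≠ 0 := RatFunc.algebraMap_ne_zero hb0
    have hkz : algebraMap L[X] (RatFunc L) k ≠ 0 := RatFunc.algebraMap_ne_zero hk0
    have h1 : algebraMap L[X] (RatFunc L) f / algebraMap L[X] (RatFunc L) (derivative f)
        = algebraMap L[X] (RatFunc L) a / algebraMap L[X] (RatFunc L) b := by
      rw [← hkb, ← hka, map_mul, map_mul, mul_div_mul_left _ _ hkz]
    rw [hN, h1, hp, map_sub, map_mul, RatFunc.algebraMap_X, sub_div,
      mul_div_cancel_right₀ _ hbz]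
  obtain ⟨hnum, hdenom⟩ := newton_aux hp0 hb0 hpb
  rw [hNeq, hnum, hdenom, hnp, hnb.1]
  exact max_eq_left (Nat.sub_le r 1)
end

section
/- Let L be an algebraically closed field of characteristic zero, f ∈ L[t] of degree d > 1 with r > 1 distinct roots, and α a simple root of f. Then the Newton map N_f is totally ramified at the fixed point α if and only if E_α(t) = (d-1)·(t - α)^{r-2}, where E_α(t) = Σ_{i>1} m_i ∏_{j≠1,i}(t - α_j) with α_2,...,α_r the other distinct roots and m_i their multiplicities. -/
open Polynomial Finset

/-- Let `f = c·∏(X - αᵢ)^{mᵢ}` have degree `d > 1` and `r > 1` distinct roots, with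
`α = α₀` a simple root.  The Newton map `N_f` (of degree `r`) is totally ramified at the
fixed point `α` — equivalently, since `N_f(t) - α = (t-α)²·E_α(t)/D(t)` with `D(α) ≠ 0`,
the polynomial `(t-α)²·E_α(t)` is a nonzero constant multiple of `(t-α)^r` — if and only
if `E_α(t) = (d-1)·(t-α)^{r-2}`. -/
theorem newton_totally_ramified_iff {L : Type*} [Field L] [IsAlgClosed L] [CharZero L]
    (r : ℕ) [NeZero r] (hr : 1 < r) (α : Fin r → L) (hα : Function.Injective α)
    (m : Fin r → ℕ) (hm : ∀ i, 0 < m i) (hm0 : m 0 = 1)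
    (c : L) (hc : c ≠ 0) (f : L[X])
    (hf : f = C c * ∏ i, (X - C (α i)) ^ m i)
    (d : ℕ) (hd : d = f.natDegree) (hd1 : 1 < d)
    (E : L[X])
    (hE : E = ∑ i ∈ univ.erase 0, C (m i : L) * ∏ j ∈ (univ.erase 0).erase i, (X - C (α j))) :
    (∃ u : L, u ≠ 0 ∧ (X - C (α 0)) ^ 2 * E = C u * (X - C (α 0)) ^ r) ↔
      E = C ((d : L) - 1) * (X - C (α 0)) ^ (r - 2) := by
  have hrr : 2 + (r - 2) = r := by omega
  -- sum of multiplicities = d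
  have hsum : ∑ i, m i = d := by
    rw [hd, hf, natDegree_C_mul hc,
      natDegree_prod_of_monic _ _ (fun i _ => (monic_X_sub_C _).pow _)]
    simp [natDegree_pow]
  have hcard1 : (univ.erase (0 : Fin r)).card = r - 1 := by
    rw [card_erase_of_mem (mem_univ _), card_univ, Fintype.card_fin]
  -- coefficient of E at r-2
  have hcoeff : E.coeff (r - 2) = (d : L) - 1 := by
    have hprod : ∀ i ∈ univ.erase (0 : Fin r),
        (∏ j ∈ (univ.erase 0).erase i, (X - C (α j))).coeff (r - 2) = 1 := by
      intro i hi
      have hmon : (∏ j ∈ (univ.erase 0).erase i, (X - C (α j))).Monic :=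
        monic_prod_of_monic _ _ (fun j _ => monic_X_sub_C _)
      have hdeg : (∏ j ∈ (univ.erase 0).erase i, (X - C (α j))).natDegree = r - 2 := by
        rw [natDegree_prod_of_monic _ _ (fun j _ => monic_X_sub_C _)]
        simp [card_erase_of_mem hi, hcard1]
        omega
      have := hmon.coeff_natDegree
      rwa [hdeg] at this
    have hsum' : ∑ i ∈ univ.erase (0 : Fin r), m i = d - 1 := by
      have := Finset.add_sum_erase univ m (mem_univ (0 : Fin r))
      omega
    rw [hE, finset_sum_coeff]
    calc ∑ i ∈ univ.erase (0 : Fin r),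
          (C (m i : L) * ∏ j ∈ (univ.erase 0).erase i, (X - C (α j))).coeff (r - 2)
        = ∑ i ∈ univ.erase (0 : Fin r), (m i : L) := by
          refine Finset.sum_congr rfl (fun i hi => ?_)
          rw [coeff_C_mul, hprod i hi, mul_one]
      _ = (d : L) - 1 := by
          rw [← Nat.cast_sum, hsum']
          have : (1 : ℕ) ≤ d := by omega
          push_cast [Nat.cast_sub this]
          ring
  have hd1L : (d : L) - 1 ≠ 0 := sub_ne_zero.mpr (by exact_mod_cast hd1.ne')
  constructor
  · rintro ⟨u, hu, heq⟩
    have hX : ((X : L[X]) - C (α 0)) ^ 2 ≠ 0 := pow_ne_zero _ (X_sub_C_ne_zero _)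
    have hE' : E = C u * (X - C (α 0)) ^ (r - 2) := by
      apply mul_left_cancel₀ hX
      rw [heq, mul_left_comm, ← pow_add, hrr]
    have hu' : u = (d : L) - 1 := by
      have := hcoeff
      rw [hE', coeff_C_mul] at this
      have hmon : ((X - C (α 0)) ^ (r - 2) : L[X]).coeff (r - 2) = 1 := by
        have := ((monic_X_sub_C (α 0)).pow (r - 2)).coeff_natDegree
        rwa [natDegree_pow, natDegree_X_sub_C, mul_one] at this
      rw [hmon, mul_one] at this
      exact this
    rw [hE', hu']
  · intro h
    refine ⟨(d : L) - 1, hd1L, ?_⟩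
    rw [h, mul_left_comm, ← pow_add, hrr]
end

section
/- Let K be a field of characteristic zero and f ∈ K[t] a polynomial of degree d ≥ 3 with no repeated roots. Suppose α is a simple root of f such that E_α(t) = (d-1)(t-α)^{d-2}, where E_α(t) = Σ_{i>1} ∏_{j≠1,i}(t - α_j) and α = α_1, α_2, ..., α_d are the roots of f in an algebraic closure. Then there exist nonzero constants A, B ∈ K with f(t) = A(t - α)^d + B(t - α), and moreover α ∈ K. -/
open Polynomial

/-- Let `f ∈ K[t]` (char 0) have degree `d ≥ 3` and no repeated roots (in an algebraic
closure `L`).  Suppose `α` is a (simple) root of `f` in `L` such that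
`E_α(t) = (d-1)(t-α)^{d-2}`, where `E_α = g'` for the monic polynomial `g` with
`f = (leading coeff)·(t - α)·g(t)`.  Then `α ∈ K` and there are nonzero `A, B ∈ K` with
`f(t) = A(t - α)^d + B(t - α)`. -/
theorem exceptional_root_form {K : Type*} [Field K] [CharZero K]
    {L : Type*} [Field L] [Algebra K L] [IsAlgClosure K L]
    (f : K[X]) (d : ℕ) (hd : d = f.natDegree) (hd3 : 3 ≤ d)
    (hsqf : Squarefree (f.map (algebraMap K L)))
    (α : L) (hα : Polynomial.aeval α f = 0)
    (g : L[X]) (hg : g.Monic)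
    (hfg : f.map (algebraMap K L) = C (f.map (algebraMap K L)).leadingCoeff * (X - C α) * g)
    (hE : derivative g = C ((d : L) - 1) * (X - C α) ^ (d - 2)) :
    ∃ a A B : K, A ≠ 0 ∧ B ≠ 0 ∧ algebraMap K L a = α ∧
      f = C A * (X - C a) ^ d + C B * (X - C a) := by
  haveI : CharZero L := charZero_of_injective_algebraMap (algebraMap K L).injective
  set φ := algebraMap K L with hφ
  have hφinj : Function.Injective φ := (algebraMap K L).injective
  obtain ⟨m, rfl⟩ : ∃ m, d = m + 3 := ⟨d - 3, by omega⟩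
  have hf0 : f ≠ 0 := by
    intro h; rw [h, natDegree_zero] at hd; omega
  have hlc : f.leadingCoeff ≠ 0 := leadingCoeff_ne_zero.mpr hf0
  set c : L := (f.map φ).leadingCoeff with hc
  have hcφ : c = φ f.leadingCoeff := leadingCoeff_map_of_leadingCoeff_ne_zero φ (by
    simpa using hlc)
  have hc0 : c ≠ 0 := by rw [hcφ]; simpa using hlc
  -- g = (X - C α)^(m+2) + C b
  have hder : derivative (g - (X - C α) ^ (m + 2)) = 0 := by
    rw [derivative_sub, hE, derivative_X_sub_C_pow]
    push_cast
    ring_nf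
  have hgb : g = (X - C α) ^ (m + 2) + C ((g - (X - C α) ^ (m + 2)).coeff 0) := by
    have := eq_C_of_derivative_eq_zero hder
    linear_combination (norm := ring_nf) this
  set b : L := (g - (X - C α) ^ (m + 2)).coeff 0 with hb
  have hF : f.map φ = C c * (X - C α) ^ (m + 3) + C (c * b) * (X - C α) := by
    rw [hfg, hgb, C_mul]
    ring
  -- b ≠ 0
  have hb0 : b ≠ 0 := by
    intro h
    have hdvd : (X - C α) * (X - C α) ∣ f.map φ := by
      rw [hF, h]
      simp only [mul_zero, map_zero, zero_mul, add_zero]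
      exact Dvd.dvd.mul_left ⟨(X - C α) ^ (m + 1), by ring⟩ _
    have := hsqf _ hdvd
    exact (not_isUnit_X_sub_C α) this
  -- coefficient at m+2
  have hcoeff : φ (f.coeff (m + 2)) = c * (-α * (m + 3)) := by
    have h1 : (f.map φ).coeff (m + 2) = c * (-α * (m + 3)) := by
      have h2 : ((C (c * b) * (X - C α) : L[X])).coeff (m + 2) = 0 := by
        rw [coeff_C_mul]; simp [coeff_X, coeff_C]
      have hXα : (X - C α : L[X]) = X + C (-α) := by simp [sub_eq_add_neg]
      rw [hF, coeff_add, h2, add_zero, hXα, coeff_C_mul, coeff_X_add_C_pow,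
        show (m + 3) - (m + 2) = 1 from by omega, Nat.choose_succ_self_right]
      push_cast; ring
    rw [← h1, coeff_map]
  set a : K := -f.coeff (m + 2) / ((m + 3 : K) * f.leadingCoeff) with ha
  have hmK : ((m : K) + 3) ≠ 0 := by
    exact_mod_cast Nat.cast_ne_zero (R := K).mpr (show m + 3 ≠ 0 by omega)
  have haα : φ a = α := by
    have hmL : ((m : L) + 3) ≠ 0 := by
      exact_mod_cast Nat.cast_ne_zero (R := L).mpr (show m + 3 ≠ 0 by omega)
    have h3 : φ ((m : K) + 3) = (m : L) + 3 := by
      rw [map_add, map_natCast, map_ofNat]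
    rw [ha, map_div₀, map_neg, hcoeff, map_mul, h3, ← hcφ]
    field_simp
  set A : K := f.leadingCoeff with hA
  set B : K := (f - C A * (X - C a) ^ (m + 3)).coeff 1 with hB
  have hBφ : φ B = c * b := by
    have : ((f - C A * (X - C a) ^ (m + 3)).map φ) = C (c * b) * (X - C α) := by
      rw [Polynomial.map_sub, hF]
      simp only [Polynomial.map_mul, Polynomial.map_pow, Polynomial.map_sub, map_C, map_X, haα,
        ← hcφ]
      ring
    have h1 := congrArg (fun p => Polynomial.coeff p 1) this
    simp only [coeff_map] at h1
    rw [hB, h1]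
    have : (X - C α : L[X]).coeff 1 = 1 := by simp [coeff_X, coeff_C]
    rw [coeff_C_mul, this, mul_one]
  have hB0 : B ≠ 0 := by
    intro h
    rw [h, map_zero] at hBφ
    exact (mul_ne_zero hc0 hb0) hBφ.symm
  refine ⟨a, A, B, hlc, hB0, haα, ?_⟩
  apply Polynomial.map_injective φ hφinj
  rw [hF]
  simp only [Polynomial.map_add, Polynomial.map_mul, Polynomial.map_pow, Polynomial.map_sub,
    map_C, map_X, haα, hBφ, ← hcφ]
end

section
/- Let K be a field of characteristic zero, d ≥ 3, α ∈ K, and A, B ∈ K nonzero. Let f(t) = A(t - α)^d + B(t - α). Then f has no repeated root (in an algebraic closure) if and only if B ≠ 0, and for this f one has E_α(t) = (d-1)(t - α)^{d-2}, i.e., the Newton map N_f is totally ramified at the simple root α. -/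
open Polynomial

/-- Let `K` be a field of characteristic zero, `d ≥ 3`, `α ∈ K`, `A ≠ 0`, and
`f(t) = A(t-α)^d + B(t-α)`.  Then `f` has no repeated root (i.e. is squarefree) iff
`B ≠ 0`; and for this `f`, writing `f = A(t - α)·g(t)` with `g = (t-α)^{d-1} + B/A`, the
polynomial `E_α = g'` equals `(d-1)(t-α)^{d-2}`, i.e. the Newton map `N_f` is totally
ramified at the simple root `α`. -/
theorem exceptional_polynomial_is_totally_ramified {K : Type*} [Field K] [CharZero K]
    (d : ℕ) (hd : 3 ≤ d) (α A B : K) (hA : A ≠ 0)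
    (f : K[X]) (hf : f = C A * (X - C α) ^ d + C B * (X - C α)) :
    (Squarefree f ↔ B ≠ 0) ∧
      derivative ((X - C α) ^ (d - 1) + C (B / A)) =
        C ((d : K) - 1) * (X - C α) ^ (d - 2) := by
  have hderiv : derivative ((X - C α) ^ (d - 1) + C (B / A)) =
      C ((d : K) - 1) * (X - C α) ^ (d - 2) := by
    rw [derivative_add, derivative_C, add_zero, derivative_pow, derivative_X_sub_C]
    have h1 : ((d - 1 : ℕ) : K) = (d : K) - 1 := by
      rw [Nat.cast_sub (by omega)]; norm_num
    have h2 : d - 1 - 1 = d - 2 := by omega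
    rw [h2, mul_one, h1]
  refine ⟨?_, hderiv⟩
  constructor
  · intro hsq hB
    subst hB
    have := hsq (X - C α) ?_
    · exact not_isUnit_X_sub_C α this
    · rw [hf]
      simp only [map_zero, zero_mul, add_zero]
      exact Dvd.dvd.mul_left (by
        have : (X - C α) * (X - C α) = (X - C α) ^ 2 := by ring
        rw [this]
        exact pow_dvd_pow _ (by omega)) _
  · intro hB
    set g : K[X] := (X - C α) ^ (d - 1) + C (B / A) with hg
    have hdd : (X - C α) ^ d = (X - C α) ^ (d - 1) * (X - C α) := by
      rw [← pow_succ]; congr 1; omega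
    have hBB : C A * C (B / A) = C B := by
      rw [← Polynomial.C_mul, mul_div_cancel₀ B hA]
    have hfact : f = C A * ((X - C α) * g) := by
      rw [hf, hg, hdd, ← hBB]; ring
    -- coprimality of (X - C α) and g
    have hcop : IsCoprime (X - C α) g := by
      refine ⟨-(C (A / B) * (X - C α) ^ (d - 2)), C (A / B), ?_⟩
      have hBA : C (A / B) * C (B / A) = (1 : K[X]) := by
        rw [← Polynomial.C_mul]
        rw [div_mul_div_comm, mul_comm, div_self (by exact mul_ne_zero hB hA : B * A ≠ 0),
          Polynomial.C_1]
      have hpow : (X - C α) ^ (d - 2) * (X - C α) = (X - C α) ^ (d - 1) := by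
        rw [← pow_succ]; congr 1; omega
      rw [hg]
      linear_combination (-(C (A / B)) : K[X]) * hpow + hBA
    have hgsep : g.Separable := by
      rw [Polynomial.Separable, hderiv]
      have hdne : ((d : K) - 1) ≠ 0 :=
        sub_ne_zero.mpr (by exact_mod_cast (by omega : d ≠ 1))
      rw [isCoprime_mul_unit_left_right (isUnit_C.mpr hdne.isUnit)]
      exact (hcop.symm).pow_right
    have hgsq : Squarefree g := PerfectField.separable_iff_squarefree.mp hgsep
    rw [hfact]
    have hAu : IsUnit (C A) := isUnit_C.mpr hA.isUnit
    rw [squarefree_mul_iff]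
    refine ⟨?_, hAu.squarefree, ?_⟩
    · exact fun c hc1 _ => isUnit_of_dvd_unit hc1 hAu
    · rw [squarefree_mul_iff]
      exact ⟨hcop.isRelPrime, (irreducible_X_sub_C α).squarefree, hgsq⟩
end

section
/- Let K be a number field, f ∈ K[t] of degree d ≥ 2 with distinct roots α_1,...,α_r in K, and N its Newton map. Let 𝔭 be a prime of the ring of integers of K such that ord_𝔭(α_i) ≥ 0 for all i, ord_𝔭(d) = 0, and ord_𝔭(d - 1) = 0. If x ∈ K has ord_𝔭(x) < 0, then ord_𝔭(N(x)) = ord_𝔭(x). -/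
open Polynomial IsDedekindDomain

set_option maxHeartbeats 1000000

section Aux

variable {K : Type*} [Field K] [NumberField K]
  (v : HeightOneSpectrum (NumberField.RingOfIntegers K))

lemma aux_int_val_le_one (n : ℤ) : v.valuation K ((n : K)) ≤ 1 := by
  have := v.valuation_le_one (K := K) (n : NumberField.RingOfIntegers K)
  exact_mod_cast this

lemma aux_prod_coeff : ∀ (s : Multiset K), (∀ r ∈ s, v.valuation K r ≤ 1) → ∀ k,
    v.valuation K ((s.map fun r => X - C r).prod.coeff k) ≤ 1 := by
  intro s
  induction s using Multiset.induction_on with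
  | empty =>
    intro _ k
    simp only [Multiset.map_zero, Multiset.prod_zero, coeff_one]
    split <;> simp
  | cons r s ih =>
    intro hs k
    have hr : v.valuation K r ≤ 1 := hs r (Multiset.mem_cons_self r s)
    have ih' := ih (fun a ha => hs a (Multiset.mem_cons_of_mem ha))
    rw [Multiset.map_cons, Multiset.prod_cons, sub_mul, coeff_sub, coeff_C_mul]
    refine le_trans (Valuation.map_sub _ _ _) (max_le ?_ ?_)
    · rcases k with _ | k
      · simp
      · rw [coeff_X_mul]; exact ih' k
    · rw [map_mul]
      exact mul_le_one' hr (ih' k)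

lemma aux_eval (p : K[X]) (n : ℕ) (hn : p.natDegree ≤ n)
    (h0 : v.valuation K (p.coeff n) ≠ 0)
    (hc : ∀ k < n, v.valuation K (p.coeff k) ≤ v.valuation K (p.coeff n))
    (x : K) (hx : 1 < v.valuation K x) :
    v.valuation K (p.eval x) = v.valuation K (p.coeff n) * v.valuation K x ^ n := by
  have hxne : v.valuation K x ≠ 0 := fun h => by simp [h] at hx
  have hev : p.eval x = ∑ k ∈ Finset.range (n + 1), p.coeff k * x ^ k :=
    eval_eq_sum_range' (lt_of_le_of_lt hn (Nat.lt_succ_self n)) x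
  rw [hev, Finset.sum_range_succ]
  have htop : v.valuation K (p.coeff n * x ^ n) = v.valuation K (p.coeff n) * v.valuation K x ^ n := by
    rw [map_mul, map_pow]
  rw [Valuation.map_add_eq_of_lt_right, htop]
  rw [htop]
  refine Valuation.map_sum_lt _ (mul_ne_zero h0 (pow_ne_zero _ hxne)) ?_
  intro k hk
  rw [Finset.mem_range] at hk
  rw [map_mul, map_pow]
  exact mul_lt_mul_of_le_of_lt_of_nonneg_of_pos (hc k hk) (pow_lt_pow_right₀ hx hk) zero_le' (zero_lt_iff.mpr h0)

end Aux

/-- Let `K` be a number field, `f ∈ K[t]` of degree `d ≥ 2` splitting with all roots in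
`K`, and `N` its Newton map.  Let `𝔭` be a prime of `𝓞_K` at which every root of `f` is
integral (`ord_𝔭 ≥ 0`, i.e. valuation ≤ 1) and at which `d` and `d - 1` are units.
If `ord_𝔭(x) < 0` (i.e. the `𝔭`-adic valuation of `x` exceeds 1), then
`ord_𝔭(N(x)) = ord_𝔭(x)`. -/
theorem newton_preserves_negative_ord {K : Type*} [Field K] [NumberField K]
    (v : HeightOneSpectrum (NumberField.RingOfIntegers K))
    (f : K[X]) (hd : 2 ≤ f.natDegree)
    (hsplit : f.Splits)
    (hroots : ∀ a ∈ f.roots, v.valuation K a ≤ 1)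
    (hdv : v.valuation K ((f.natDegree : K)) = 1)
    (hdv' : v.valuation K ((f.natDegree : K) - 1) = 1)
    (x : K) (hx : 1 < v.valuation K x) :
    v.valuation K (x - f.eval x / (derivative f).eval x) = v.valuation K x := by
  set d := f.natDegree with hdd
  have hf0 : f ≠ 0 := fun h => by simp [h, hdd] at hd
  have hxne : v.valuation K x ≠ 0 := fun h => by simp [h] at hx
  have hlc0 : v.valuation K f.leadingCoeff ≠ 0 := by
    rw [Valuation.ne_zero_iff]
    exact leadingCoeff_ne_zero.mpr hf0
  -- all coefficients of f are bounded by the leading coefficient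
  have hcf : ∀ k, v.valuation K (f.coeff k) ≤ v.valuation K f.leadingCoeff := by
    intro k
    conv_lhs => rw [hsplit.eq_prod_roots]
    rw [coeff_C_mul, map_mul]
    exact mul_le_of_le_one_right' (aux_prod_coeff v f.roots hroots k)
  have hlcd : f.coeff d = f.leadingCoeff := coeff_natDegree
  -- evaluate f
  have hf : v.valuation K (f.eval x) = v.valuation K f.leadingCoeff * v.valuation K x ^ d := by
    have := aux_eval v f d le_rfl (by rw [hlcd]; exact hlc0)
      (fun k _ => le_of_le_of_eq (hcf k) (congrArg _ hlcd.symm)) x hx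
    rwa [hlcd] at this
  -- evaluate f'
  have hd1 : d - 1 + 1 = d := by omega
  have hder_top : (derivative f).coeff (d - 1) = f.coeff d * (d : K) := by
    rw [coeff_derivative, hd1, ← Nat.cast_succ, Nat.succ_eq_add_one, hd1]
  have hvder_top : v.valuation K ((derivative f).coeff (d - 1)) = v.valuation K f.leadingCoeff := by
    rw [hder_top, map_mul, hlcd, hdv, mul_one]
  have hf' : v.valuation K ((derivative f).eval x)
      = v.valuation K f.leadingCoeff * v.valuation K x ^ (d - 1) := by
    rw [← hvder_top]
    refine aux_eval v (derivative f) (d - 1) (natDegree_derivative_le f) ?_ ?_ x hx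
    · rw [hvder_top]; exact hlc0
    · intro k _
      rw [hvder_top, coeff_derivative, map_mul]
      have h1 : v.valuation K ((k : K) + 1) ≤ 1 := by
        have := aux_int_val_le_one v ((k : ℤ) + 1)
        push_cast at this
        exact this
      exact le_trans (mul_le_of_le_one_right' h1) (hcf (k + 1))
  have hf'ne : (derivative f).eval x ≠ 0 := by
    rw [← Valuation.ne_zero_iff (v := v.valuation K), hf']
    exact mul_ne_zero hlc0 (pow_ne_zero _ hxne)
  -- the polynomial g = X * f' - f
  set g : K[X] := X * derivative f - f with hg
  have hgdeg : g.natDegree ≤ d := by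
    refine le_trans (natDegree_sub_le _ _) (max_le ?_ le_rfl)
    calc (X * derivative f).natDegree ≤ X.natDegree + (derivative f).natDegree :=
          natDegree_mul_le
      _ ≤ 1 + (d - 1) := by
          exact add_le_add (le_of_eq natDegree_X) (natDegree_derivative_le f)
      _ = d := by omega
  have hgcoeff : ∀ k, 1 ≤ k → g.coeff k = f.coeff k * ((k : K) - 1) := by
    intro k hk
    obtain ⟨m, rfl⟩ : ∃ m, k = m + 1 := ⟨k - 1, by omega⟩
    rw [hg, coeff_sub, coeff_X_mul, coeff_derivative]
    push_cast
    ring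
  have hgtop : v.valuation K (g.coeff d) = v.valuation K f.leadingCoeff := by
    rw [hgcoeff d (by omega), map_mul, hlcd, hdv', mul_one]
  have hgval : v.valuation K (g.eval x) = v.valuation K f.leadingCoeff * v.valuation K x ^ d := by
    rw [← hgtop]
    refine aux_eval v g d hgdeg (by rw [hgtop]; exact hlc0) ?_ x hx
    intro k hk
    rw [hgtop]
    rcases Nat.eq_zero_or_pos k with rfl | hk1
    · have : g.coeff 0 = -f.coeff 0 := by
        rw [hg, coeff_sub, mul_coeff_zero, coeff_X_zero, zero_mul, zero_sub]
      rw [this, Valuation.map_neg]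
      exact hcf 0
    · rw [hgcoeff k hk1, map_mul]
      have h1 : v.valuation K ((k : K) - 1) ≤ 1 := by
        have := aux_int_val_le_one v ((k : ℤ) - 1)
        push_cast at this
        exact this
      exact le_trans (mul_le_of_le_one_right' h1) (hcf k)
  -- rewrite the Newton map value
  have hNewt : x - f.eval x / (derivative f).eval x = g.eval x / (derivative f).eval x := by
    rw [hg]
    field_simp
    simp
  rw [hNewt, map_div₀, hgval, hf']
  rw [div_eq_iff (mul_ne_zero hlc0 (pow_ne_zero _ hxne))]
  conv_lhs => rw [← hd1]
  rw [pow_succ, ← mul_assoc, mul_comm]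
end
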